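/- arXiv:1507.00487 — 3 statements merged into one kernel-verified Lean document; each statement's English description precedes it below -/
import Mathlib

section
/- For real numbers σ, τ, σ̃, τ̃, the complex numbers α(σ,τ) and α(σ̃,τ̃) are equal if and only if the multisets-as-sets {σ, τ, −(σ+τ)} and {σ̃, τ̃, −(σ̃+τ̃)} are equal as subsets of ℝ/ℤ. -/
/-- `α(σ,τ) = e^{2πiσ} + e^{2πiτ} + e^{-2πi(σ+τ)}`. -/
noncomputable def alpha (σ τ : ℝ) : ℂ :=
  Complex.exp (2 * Real.pi * Complex.I * σ) + Complex.exp (2 * Real.pi * Complex.I * τ) +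
    Complex.exp (-(2 * Real.pi * Complex.I * (σ + τ)))

/-!
Put `u, v, w = e(σ), e(τ), e(-(σ+τ))` with `e(x) = exp(2πix)`: points of the unit circle with
`u v w = 1` and `u + v + w = α(σ,τ)`, and `e` is injective on `ℝ/ℤ`. Since `conj u = u⁻¹`, the
elementary symmetric functions of `u, v, w` are `α`, `conj α` and `1`, so `α` determines `{u, v, w}`
as the root set of a cubic. Conversely, the set `{u, v, w}` together with the product `u v w = 1`
determines the multiset `{u, v, w}`, since a repeated point is forced by the product; hence it
determines the sum `α`.
-/

open ComplexConjugate

theorem Function.Injective.triple_eq_triple_iff {α β : Type*} {f : α → β}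
    (hf : Function.Injective f) {a b c a' b' c' : α} :
    ({f a, f b, f c} : Set β) = {f a', f b', f c'} ↔ ({a, b, c} : Set α) = {a', b', c'} := by
  rw [← (Set.image_injective.2 hf).eq_iff]
  simp only [Set.image_insert_eq, Set.image_singleton]

section ElementarySymmetric

variable {R : Type*} [CommRing R]

theorem mem_triple_iff_cubic_eq_zero [NoZeroDivisors R] {a b c x : R} :
    x ∈ ({a, b, c} : Set R) ↔ (x - a) * (x - b) * (x - c) = 0 := by
  simp only [Set.mem_insert_iff, Set.mem_singleton_iff, mul_eq_zero, sub_eq_zero, or_assoc]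

theorem triple_eq_of_esymm_eq [NoZeroDivisors R] {a b c a' b' c' : R}
    (h₁ : a + b + c = a' + b' + c') (h₂ : a * b + b * c + c * a = a' * b' + b' * c' + c' * a')
    (h₃ : a * b * c = a' * b' * c') :
    ({a, b, c} : Set R) = {a', b', c'} := by
  ext x
  rw [mem_triple_iff_cubic_eq_zero, mem_triple_iff_cubic_eq_zero]
  have hcubic : (x - a) * (x - b) * (x - c) = (x - a') * (x - b') * (x - c') := by
    linear_combination (-x ^ 2) * h₁ + x * h₂ - h₃
  rw [hcubic]

theorem exists_pair_of_not_pairwise_ne {a b c : R} (h : ¬(a ≠ b ∧ a ≠ c ∧ b ≠ c)) :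
    ∃ u v : R, ({a, b, c} : Set R) = {u, v} ∧ a + b + c = 2 * u + v ∧ a * b * c = u ^ 2 * v := by
  simp only [not_and_or, not_not] at h
  rcases h with rfl | rfl | rfl
  · exact ⟨a, c, by simp, by ring, by ring⟩
  · exact ⟨a, b, by simp [Set.pair_comm], by ring, by ring⟩
  · exact ⟨b, a, by simp [Set.pair_comm], by ring, by ring⟩

theorem sum_eq_of_pair_eq [NoZeroDivisors R] {u v u' v' : R}
    (hset : ({u, v} : Set R) = {u', v'}) (hprod : u ^ 2 * v = u' ^ 2 * v')
    (hne : u ^ 2 * v ≠ 0) : 2 * u + v = 2 * u' + v' := by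
  rcases Set.pair_eq_pair_iff.mp hset with ⟨rfl, rfl⟩ | ⟨rfl, rfl⟩
  · rfl
  · have huv : u * v * (u - v) = 0 := by linear_combination hprod
    have hu : u ≠ 0 := fun hu => hne (by simp [hu])
    have hv : v ≠ 0 := fun hv => hne (by simp [hv])
    have : u = v := sub_eq_zero.mp ((mul_eq_zero.mp huv).resolve_left (mul_ne_zero hu hv))
    rw [this]

theorem sum_eq_of_pairwise_ne_of_triple_eq {a b c a' b' c' : R}
    (hd : a ≠ b ∧ a ≠ c ∧ b ≠ c) (hd' : a' ≠ b' ∧ a' ≠ c' ∧ b' ≠ c')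
    (hset : ({a, b, c} : Set R) = {a', b', c'}) : a + b + c = a' + b' + c' := by
  classical
  have sum_triple : ∀ {x y z : R}, x ≠ y ∧ x ≠ z ∧ y ≠ z →
      ∑ t ∈ ({x, y, z} : Finset R), t = x + y + z := by
    rintro x y z ⟨hxy, hxz, hyz⟩
    rw [Finset.sum_insert (by simp [hxy, hxz]), Finset.sum_pair hyz, add_assoc]
  have hfin : ({a, b, c} : Finset R) = {a', b', c'} := Finset.coe_inj.mp (by simpa using hset)
  rw [← sum_triple hd, ← sum_triple hd', hfin]

theorem sum_eq_of_triple_eq [NoZeroDivisors R] {a b c a' b' c' : R}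
    (hset : ({a, b, c} : Set R) = {a', b', c'}) (hprod : a * b * c = a' * b' * c')
    (hne : a * b * c ≠ 0) : a + b + c = a' + b' + c' := by
  have ncard_triple : ∀ {x y z : R}, x ≠ y ∧ x ≠ z ∧ y ≠ z → ({x, y, z} : Set R).ncard = 3 :=
    fun ⟨hxy, hxz, hyz⟩ => Set.ncard_eq_three.mpr ⟨_, _, _, hxy, hxz, hyz, rfl⟩
  have ncard_pair_le : ∀ x y : R, ({x, y} : Set R).ncard ≤ 2 := fun x y =>
    (Set.ncard_insert_le x {y}).trans (by simp)
  by_cases hd : a ≠ b ∧ a ≠ c ∧ b ≠ c <;> by_cases hd' : a' ≠ b' ∧ a' ≠ c' ∧ b' ≠ c'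
  · exact sum_eq_of_pairwise_ne_of_triple_eq hd hd' hset
  · obtain ⟨u', v', hpair', -, -⟩ := exists_pair_of_not_pairwise_ne hd'
    have := ncard_pair_le u' v'
    rw [← hpair', ← hset, ncard_triple hd] at this
    omega
  · obtain ⟨u, v, hpair, -, -⟩ := exists_pair_of_not_pairwise_ne hd
    have := ncard_pair_le u v
    rw [← hpair, hset, ncard_triple hd'] at this
    omega
  · obtain ⟨u, v, hpair, hsum, hp⟩ := exists_pair_of_not_pairwise_ne hd
    obtain ⟨u', v', hpair', hsum', hp'⟩ := exists_pair_of_not_pairwise_ne hd'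
    rw [hsum, hsum']
    refine sum_eq_of_pair_eq (hpair.symm.trans (hset.trans hpair')) ?_ (hp ▸ hne)
    rw [← hp, ← hp', hprod]

end ElementarySymmetric

namespace Circle

theorem mul_add_mul_add_mul_eq_conj {u v w : Circle} (h : u * v * w = 1) :
    (u * v + v * w + w * u : ℂ) = conj (u + v + w : ℂ) := by
  have huv : u * v = w⁻¹ := eq_inv_of_mul_eq_one_left h
  have hvw : v * w = u⁻¹ := eq_inv_of_mul_eq_one_left (by rw [← h]; ac_rfl)
  have hwu : w * u = v⁻¹ := eq_inv_of_mul_eq_one_left (by rw [← h]; ac_rfl)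
  simp only [← coe_mul, huv, hvw, hwu, coe_inv_eq_conj, map_add]
  ring

theorem sum_eq_iff_triple_eq {u v w u' v' w' : Circle} (h : u * v * w = 1)
    (h' : u' * v' * w' = 1) :
    (u + v + w : ℂ) = u' + v' + w' ↔ ({u, v, w} : Set Circle) = {u', v', w'} := by
  have hprod : ((u * v * w : Circle) : ℂ) = ((u' * v' * w' : Circle) : ℂ) := by rw [h, h']
  push_cast at hprod
  have hinj : Function.Injective fun z : Circle => (z : ℂ) := coe_injective
  refine Iff.trans ?_ hinj.triple_eq_triple_iff
  constructor
  · intro hsum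
    refine triple_eq_of_esymm_eq hsum ?_ hprod
    rw [mul_add_mul_add_mul_eq_conj h, mul_add_mul_add_mul_eq_conj h', hsum]
  · intro hset
    exact sum_eq_of_triple_eq hset hprod (by simp)

end Circle

theorem alpha_eq_coe_toCircle (σ τ : ℝ) :
    alpha σ τ = (AddCircle.toCircle (σ : AddCircle (1 : ℝ)) : ℂ) +
      AddCircle.toCircle (τ : AddCircle (1 : ℝ)) +
      AddCircle.toCircle ((-(σ + τ) : ℝ) : AddCircle (1 : ℝ)) := by
  simp only [alpha, AddCircle.toCircle_apply_mk, Circle.coe_exp]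
  push_cast
  ring_nf

theorem toCircle_mul_toCircle_mul_toCircle_neg_add (σ τ : ℝ) :
    AddCircle.toCircle (σ : AddCircle (1 : ℝ)) * AddCircle.toCircle (τ : AddCircle (1 : ℝ)) *
      AddCircle.toCircle ((-(σ + τ) : ℝ) : AddCircle (1 : ℝ)) = 1 := by
  rw [← AddCircle.toCircle_add, ← AddCircle.toCircle_add]
  simp

theorem alpha_eq_iff (σ τ σ' τ' : ℝ) :
    alpha σ τ = alpha σ' τ' ↔
      ({(σ : AddCircle (1:ℝ)), (τ : AddCircle (1:ℝ)), ((-(σ + τ) : ℝ) : AddCircle (1:ℝ))} :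
          Set (AddCircle (1:ℝ))) =
        ({(σ' : AddCircle (1:ℝ)), (τ' : AddCircle (1:ℝ)), ((-(σ' + τ') : ℝ) : AddCircle (1:ℝ))} :
          Set (AddCircle (1:ℝ))) := by
  rw [← (AddCircle.injective_toCircle one_ne_zero).triple_eq_triple_iff, alpha_eq_coe_toCircle,
    alpha_eq_coe_toCircle]
  exact Circle.sum_eq_iff_triple_eq (toCircle_mul_toCircle_mul_toCircle_neg_add σ τ)
    (toCircle_mul_toCircle_mul_toCircle_neg_add σ' τ')
end

section
/- Let k ≥ 2. Define 𝒜_k = {α(d/(k−1), e/(k−1)) : d,e ∈ ℤ} ⊆ ℂ. Then |𝒜_k| = ((k−1)² + 3(k−1) + 2·gcd(k−1,3))/6. -/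
/-!
With `n = k - 1` and `ψ` the standard character of `ZMod n`, the values `α(d/n, e/n)` are the
sums `ψ a + ψ b + ψ c` over triples `(a, b, c)` in `ZMod n` with `a + b + c = 0`. Because
`|ψ| = 1` and `ψ a ψ b ψ c = 1`, such a sum `s` determines the polynomial
`(X - ψ a)(X - ψ b)(X - ψ c) = X³ - s X² + s̄ X - 1`, hence the multiset `{a, b, c}`. So the
values of `α` correspond to the orbits of `S₃` on zero-sum triples, which Burnside's lemma
counts: the identity fixes `n²` triples, each transposition `n`, and each `3`-cycle the
`gcd(n, 3)` triples `(a, a, a)` with `3a = 0`.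
-/

open Polynomial in
theorem Multiset.triple_eq_of_vieta {R : Type*} [CommRing R] [IsDomain R] {x y z x' y' z' : R}
    (h₁ : x + y + z = x' + y' + z') (h₂ : x * y + x * z + y * z = x' * y' + x' * z' + y' * z')
    (h₃ : x * y * z = x' * y' * z') : ({x, y, z} : Multiset R) = {x', y', z'} := by
  have expand (u v w : R) : (({u, v, w} : Multiset R).map (X - C ·)).prod =
      X ^ 3 - C (u + v + w) * X ^ 2 + C (u * v + u * w + v * w) * X - C (u * v * w) := by
    simp only [Multiset.insert_eq_cons, Multiset.map_cons, Multiset.prod_cons,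
      Multiset.map_singleton, Multiset.prod_singleton, C_add, C_mul]
    ring
  rw [← roots_multiset_prod_X_sub_C {x, y, z}, ← roots_multiset_prod_X_sub_C {x', y', z'},
    expand, expand, h₁, h₂, h₃]

theorem AddChar.triple_eq_of_sum_eq {G K : Type*} [AddCommGroup G] [Finite G] [RCLike K]
    (ψ : AddChar G K) {a b c a' b' c' : G} (h : a + b + c = 0) (h' : a' + b' + c' = 0)
    (hs : ψ a + ψ b + ψ c = ψ a' + ψ b' + ψ c') :
    ({ψ a, ψ b, ψ c} : Multiset K) = {ψ a', ψ b', ψ c'} := by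
  have prod_eq {a b c : G} (h : a + b + c = 0) : ψ a * ψ b * ψ c = 1 := by
    rw [← map_add_eq_mul, ← map_add_eq_mul, h, map_zero_eq_one]
  have mul_eq_conj {a b c : G} (h : a + b + c = 0) : ψ a * ψ b = starRingEnd K (ψ c) := by
    rw [← map_add_eq_mul, ← map_neg_eq_conj, eq_neg_of_add_eq_zero_left h]
  have pairs_eq {a b c : G} (h : a + b + c = 0) :
      ψ a * ψ b + ψ a * ψ c + ψ b * ψ c = starRingEnd K (ψ a + ψ b + ψ c) := by
    rw [mul_eq_conj h, mul_eq_conj (c := b) (by rw [← h]; abel),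
      mul_eq_conj (c := a) (by rw [← h]; abel), map_add, map_add]
    ring
  exact Multiset.triple_eq_of_vieta hs (by rw [pairs_eq h, pairs_eq h', hs])
    (by rw [prod_eq h, prod_eq h'])

theorem Function.exists_perm_comp_eq_of_map_eq {ι α : Type*} [Fintype ι] {v w : ι → α}
    (h : Finset.univ.val.map v = Finset.univ.val.map w) : ∃ σ : Equiv.Perm ι, v ∘ σ = w := by
  classical
  have hcard (a : α) : Fintype.card {i // w i = a} = Fintype.card {i // v i = a} := by
    simpa [Fintype.card_subtype, Multiset.count_map, eq_comm, Finset.card_def] using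
      (congrArg (Multiset.count a) h).symm
  exact ⟨Equiv.ofFiberEquiv fun a => Fintype.equivOfCardEq (hcard a),
    funext fun i => Equiv.ofFiberEquiv_map _ i⟩

theorem MulAction.sum_natCard_fixedBy_eq_natCard_orbits_mul {G X : Type*} [Group G]
    [MulAction G X] [Fintype G] [Finite X] :
    ∑ g : G, Nat.card (fixedBy X g) = Nat.card (orbitRel.Quotient G X) * Nat.card G := by
  classical
  have := Fintype.ofFinite X
  simp only [Nat.card_eq_fintype_card]
  convert sum_card_fixedBy_eq_card_orbits_mul_card_group G X

theorem Setoid.natCard_quotient_eq_natCard_range {α β : Type*} {r : Setoid α} {f : α → β}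
    (hf : ∀ a b, r a b ↔ f a = f b) : Nat.card (Quotient r) = Nat.card (Set.range f) :=
  Nat.card_congr <| (Quotient.congrRight fun a b => (hf a b).trans Setoid.ker_def.symm).trans
    (Setoid.quotientKerEquivRange f)

open Equiv MulAction

section ZeroSumVectors

attribute [local instance] arrowAction

variable (ι M : Type*) [Fintype ι] [AddCommMonoid M]

def zeroSumVectors : SubMulAction (Perm ι) (ι → M) where
  carrier := {v | ∑ i, v i = 0}
  smul_mem' σ v hv := (Equiv.sum_comp σ⁻¹ v).trans hv

variable {ι M}

@[simp]
theorem mem_zeroSumVectors {v : ι → M} : v ∈ zeroSumVectors ι M ↔ ∑ i, v i = 0 := Iff.rfl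

theorem mem_fixedBy_zeroSumVectors_iff {σ : Perm ι} {v : zeroSumVectors ι M} :
    v ∈ fixedBy (zeroSumVectors ι M) σ ↔ (v : ι → M) ∘ σ = v := by
  rw [← fixedBy_inv, mem_fixedBy, ← SetLike.coe_eq_coe, SubMulAction.val_smul]
  exact Iff.rfl

theorem orbitRel_zeroSumVectors_iff {v w : zeroSumVectors ι M} :
    orbitRel (Perm ι) (zeroSumVectors ι M) v w ↔
      ∃ σ : Perm ι, (w : ι → M) ∘ σ = v := by
  rw [orbitRel_apply, mem_orbit_iff]
  refine (Equiv.inv (Perm ι)).exists_congr fun σ => ?_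
  rw [← SetLike.coe_eq_coe, SubMulAction.val_smul]
  rfl

theorem natCard_fixedBy_zeroSumVectors {σ : Perm ι} {N : Type*} {f : N → ι → M}
    (hf : Function.Injective f)
    (h : ∀ v, (∑ i, v i = 0 ∧ v ∘ σ = v) ↔ v ∈ Set.range f) :
    Nat.card (fixedBy (zeroSumVectors ι M) σ) = Nat.card N := by
  have himage : (↑) '' fixedBy (zeroSumVectors ι M) σ = Set.range f := by
    ext v
    rw [← h]
    constructor
    · rintro ⟨v, hv, rfl⟩
      exact ⟨v.2, mem_fixedBy_zeroSumVectors_iff.mp hv⟩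
    · rintro ⟨hsum, hfix⟩
      exact ⟨⟨v, hsum⟩, mem_fixedBy_zeroSumVectors_iff.mpr hfix, rfl⟩
  rw [← Set.ncard_range_of_injective hf, ← himage,
    Set.ncard_image_of_injective _ Subtype.val_injective, Nat.card_coe_set_eq]

variable {G : Type*} [AddCommGroup G]

def zeroSumTriple (a b : G) : zeroSumVectors (Fin 3) G :=
  ⟨![a, b, -(a + b)], show ∑ i, ![a, b, -(a + b)] i = 0 by simp [Fin.sum_univ_three]⟩

theorem zeroSumTriple_surjective :
    Function.Surjective (Function.uncurry (zeroSumTriple (G := G))) := by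
  rintro ⟨v, hv⟩
  rw [mem_zeroSumVectors, Fin.sum_univ_three] at hv
  refine ⟨(v 0, v 1), Subtype.ext ?_⟩
  ext i
  fin_cases i
  · rfl
  · rfl
  · exact (eq_neg_of_add_eq_zero_right hv).symm

theorem natCard_fixedBy_one_zeroSumTriples :
    Nat.card (fixedBy (zeroSumVectors (Fin 3) G) (1 : Perm (Fin 3))) = Nat.card G ^ 2 := by
  rw [sq, ← Nat.card_prod]
  refine natCard_fixedBy_zeroSumVectors (f := fun p : G × G => ![p.1, p.2, -(p.1 + p.2)])
    (fun p q h => Prod.ext (congrFun h 0) (congrFun h 1)) ?_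
  simp [Fin.forall_fin_succ_pi, Fin.forall_fin_zero_pi, funext_iff, Fin.forall_fin_succ,
    Fin.sum_univ_three]
  grind

theorem natCard_fixedBy_finRotate_zeroSumTriples :
    Nat.card (fixedBy (zeroSumVectors (Fin 3) G) (finRotate 3)) =
      Nat.card (nsmulAddMonoidHom 3 : G →+ G).ker := by
  refine natCard_fixedBy_zeroSumVectors
    (f := fun a : (nsmulAddMonoidHom 3 : G →+ G).ker => fun _ => (a : G))
    (fun p q h => Subtype.ext (congrFun h 0)) ?_
  simp [Fin.forall_fin_succ_pi, Fin.forall_fin_zero_pi, funext_iff, Fin.forall_fin_succ,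
    Fin.sum_univ_three, succ_nsmul]
  grind

theorem sum_natCard_fixedBy_zeroSumTriples :
    ∑ σ : Perm (Fin 3), Nat.card (fixedBy (zeroSumVectors (Fin 3) G) σ) =
      Nat.card G ^ 2 + 3 * Nat.card G + 2 * Nat.card (nsmulAddMonoidHom 3 : G →+ G).ker := by
  have hswap01 : Nat.card (fixedBy (zeroSumVectors (Fin 3) G) (swap (0 : Fin 3) 1)) =
      Nat.card G := by
    refine natCard_fixedBy_zeroSumVectors (f := fun a : G => ![a, a, -(a + a)])
      (fun p q h => congrFun h 0) ?_
    simp [Fin.forall_fin_succ_pi, Fin.forall_fin_zero_pi, funext_iff, Fin.forall_fin_succ,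
      Fin.sum_univ_three, swap_apply_of_ne_of_ne]
    grind
  have hswap02 : Nat.card (fixedBy (zeroSumVectors (Fin 3) G) (swap (0 : Fin 3) 2)) =
      Nat.card G := by
    refine natCard_fixedBy_zeroSumVectors (f := fun a : G => ![a, -(a + a), a])
      (fun p q h => congrFun h 0) ?_
    simp [Fin.forall_fin_succ_pi, Fin.forall_fin_zero_pi, funext_iff, Fin.forall_fin_succ,
      Fin.sum_univ_three, swap_apply_of_ne_of_ne]
    grind
  have hswap12 : Nat.card (fixedBy (zeroSumVectors (Fin 3) G) (swap (1 : Fin 3) 2)) =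
      Nat.card G := by
    refine natCard_fixedBy_zeroSumVectors (f := fun a : G => ![-(a + a), a, a])
      (fun p q h => congrFun h 1) ?_
    simp [Fin.forall_fin_succ_pi, Fin.forall_fin_zero_pi, funext_iff, Fin.forall_fin_succ,
      Fin.sum_univ_three, swap_apply_of_ne_of_ne]
    grind
  have huniv : (Finset.univ : Finset (Perm (Fin 3))) =
      {1, swap 0 1, swap 0 2, swap 1 2, finRotate 3, (finRotate 3)⁻¹} := by decide
  rw [huniv, Finset.sum_insert (by decide), Finset.sum_insert (by decide),
    Finset.sum_insert (by decide), Finset.sum_insert (by decide), Finset.sum_insert (by decide),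
    Finset.sum_singleton, fixedBy_inv, natCard_fixedBy_one_zeroSumTriples, hswap01, hswap02,
    hswap12, natCard_fixedBy_finRotate_zeroSumTriples]
  ring

theorem AddChar.orbitRel_iff_sum_eq {K : Type*} [Finite G] [RCLike K] {ψ : AddChar G K}
    (hψ : Function.Injective ψ) (v w : zeroSumVectors (Fin 3) G) :
    orbitRel (Perm (Fin 3)) (zeroSumVectors (Fin 3) G) v w ↔
      ∑ i, ψ ((v : Fin 3 → G) i) = ∑ i, ψ ((w : Fin 3 → G) i) := by
  rw [orbitRel_zeroSumVectors_iff]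
  constructor
  · rintro ⟨σ, hσ⟩
    rw [← hσ]
    exact Equiv.sum_comp σ fun i => ψ ((w : Fin 3 → G) i)
  · intro hs
    have hv := v.2
    have hw := w.2
    rw [mem_zeroSumVectors, Fin.sum_univ_three] at hv hw
    rw [Fin.sum_univ_three, Fin.sum_univ_three] at hs
    have hmap (u : Fin 3 → G) :
        Finset.univ.val.map (ψ ∘ u) = {ψ (u 0), ψ (u 1), ψ (u 2)} := rfl
    refine Function.exists_perm_comp_eq_of_map_eq (Multiset.map_injective hψ ?_)
    rw [Multiset.map_map, Multiset.map_map, hmap, hmap]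
    exact ψ.triple_eq_of_sum_eq hw hv hs.symm

end ZeroSumVectors

theorem six_mul_ncard_range_sum_stdAddChar (n : ℕ) [NeZero n] :
    6 * (Set.range fun v : zeroSumVectors (Fin 3) (ZMod n) =>
      ∑ i, ZMod.stdAddChar ((v : Fin 3 → ZMod n) i)).ncard =
      n ^ 2 + 3 * n + 2 * n.gcd 3 := by
  have burnside := sum_natCard_fixedBy_eq_natCard_orbits_mul (G := Perm (Fin 3))
    (X := zeroSumVectors (Fin 3) (ZMod n))
  rw [sum_natCard_fixedBy_zeroSumTriples, IsAddCyclic.card_nsmulAddMonoidHom_ker, Nat.card_perm,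
    Nat.card_zmod, Setoid.natCard_quotient_eq_natCard_range
      (AddChar.orbitRel_iff_sum_eq ZMod.injective_stdAddChar)] at burnside
  simpa [mul_comm, Nat.factorial] using burnside.symm

theorem alpha_div_eq_sum_stdAddChar (n : ℕ) [NeZero n] (d e : ℤ) :
    alpha (d / n) (e / n) =
      ∑ i, ZMod.stdAddChar ((zeroSumTriple (d : ZMod n) e : Fin 3 → ZMod n) i) := by
  have h : -((d : ZMod n) + e) = ((-(d + e) : ℤ) : ZMod n) := by push_cast; ring
  simp only [alpha, zeroSumTriple, Fin.sum_univ_three, Matrix.cons_val, h, ZMod.stdAddChar_coe]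
  push_cast
  ring_nf

theorem card_A (k : ℕ) (hk : 2 ≤ k) :
    (({z : ℂ | ∃ d e : ℤ, z = alpha ((d : ℝ) / ((k : ℝ) - 1)) ((e : ℝ) / ((k : ℝ) - 1))}).ncard : ℚ)
      = (((k : ℚ) - 1)^2 + 3 * ((k : ℚ) - 1) + 2 * (Nat.gcd (k - 1) 3 : ℚ)) / 6 := by
  set n := k - 1
  have : NeZero n := ⟨by omega⟩
  have hparam : Function.Surjective fun p : ℤ × ℤ => zeroSumTriple (p.1 : ZMod n) p.2 :=
    zeroSumTriple_surjective.comp (ZMod.intCast_surjective.prodMap ZMod.intCast_surjective)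
  have hset : {z : ℂ | ∃ d e : ℤ, z = alpha (d / n) (e / n)} =
      Set.range fun v : zeroSumVectors (Fin 3) (ZMod n) =>
        ∑ i, ZMod.stdAddChar ((v : Fin 3 → ZMod n) i) := by
    rw [← hparam.range_comp]
    ext z
    simp [alpha_div_eq_sum_stdAddChar, eq_comm]
  have hkR : (k : ℝ) - 1 = n := by rw [Nat.cast_sub (by omega), Nat.cast_one]
  have hkQ : (k : ℚ) - 1 = n := by rw [Nat.cast_sub (by omega), Nat.cast_one]
  rw [hkR, hset, hkQ, eq_div_iff (by norm_num)]
  exact_mod_cast (mul_comm _ _).trans (six_mul_ncard_range_sum_stdAddChar n)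
end

section
/- Let k ≥ 2. Define ℬ_k = {α(d/(k²−1), dk/(k²−1)) : d ∈ ℤ} and 𝒞_k = {α(d/(k²+k+1), dk/(k²+k+1)) : d ∈ ℤ}. Then |ℬ_k| = ((k²−1) + (k−1))/2 and |𝒞_k| = ((k²+k+1) + 2·gcd(k−1,3))/3. -/
open Complex ComplexConjugate Polynomial Finset

lemma Circle.conj_eq_mul_of_mul_mul_eq_one {a b c : Circle} (h : a * b * c = 1) :
    conj (a : ℂ) = b * c := by
  rw [← coe_inv_eq_conj, ← coe_mul, inv_eq_of_mul_eq_one_right (by rwa [← mul_assoc])]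

lemma Circle.X_sub_C_mul_X_sub_C_mul_X_sub_C_of_mul_mul_eq_one {a b c : Circle}
    (h : a * b * c = 1) :
    (X - C (a : ℂ)) * (X - C (b : ℂ)) * (X - C (c : ℂ)) =
      X ^ 3 - C ((a : ℂ) + b + c) * X ^ 2 + C (conj ((a : ℂ) + b + c)) * X - 1 := by
  have habc : (a : ℂ) * b * c = 1 := by simpa using congrArg ((↑) : Circle → ℂ) h
  have hconj : conj ((a : ℂ) + b + c) = b * c + c * a + a * b := by
    rw [map_add, map_add, conj_eq_mul_of_mul_mul_eq_one h,
      conj_eq_mul_of_mul_mul_eq_one ((mul_rotate a b c).symm.trans h),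
      conj_eq_mul_of_mul_mul_eq_one
        ((mul_rotate b c a).symm.trans ((mul_rotate a b c).symm.trans h))]
  rw [hconj, ← C_1, ← habc]
  simp only [map_add, map_mul]
  ring

lemma Circle.multiset_eq_of_sum_eq {a b c a' b' c' : Circle} (h : a * b * c = 1)
    (h' : a' * b' * c' = 1) (hsum : (a : ℂ) + b + c = a' + b' + c') :
    ({a, b, c} : Multiset Circle) = {a', b', c'} := by
  have hpoly := X_sub_C_mul_X_sub_C_mul_X_sub_C_of_mul_mul_eq_one h
  rw [hsum, ← X_sub_C_mul_X_sub_C_mul_X_sub_C_of_mul_mul_eq_one h'] at hpoly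
  have hroots := congrArg Polynomial.roots hpoly
  simp [roots_mul, X_sub_C_ne_zero] at hroots
  exact Multiset.map_injective coe_injective hroots

lemma Finset.card_image_eq_of_card_fiber_eq_ite {α β : Type*} [Fintype α] [DecidableEq β]
    {f : α → β} {P : α → Prop} [DecidablePred P] {p : ℕ}
    (hfib : ∀ a, #{x | f x = f a} = if P a then 1 else p) :
    (#(univ.image f) : ℚ) = #{a | P a} + (Fintype.card α - #{a | P a}) / p := by
  have hsum : ∑ a, ((#{x | f x = f a} : ℕ) : ℚ)⁻¹ = #(univ.image f) := by
    rw [sum_comp (fun b ↦ ((#{x | f x = b} : ℕ) : ℚ)⁻¹) f, card_eq_sum_ones, Nat.cast_sum]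
    refine sum_congr rfl fun b hb ↦ ?_
    obtain ⟨a, -, rfl⟩ := mem_image.1 hb
    have : #{x | f x = f a} ≠ 0 := card_ne_zero.2 ⟨a, by simp⟩
    rw [nsmul_eq_mul, Nat.cast_one, mul_inv_cancel₀ (by exact_mod_cast this)]
  have hcompl : (#{a | ¬P a} : ℚ) = Fintype.card α - #{a | P a} := by
    rw [eq_sub_iff_add_eq', ← Nat.cast_add, card_filter_add_card_filter_not, card_univ]
  simp only [← hsum, hfib, apply_ite, Nat.cast_one, inv_one, sum_ite, sum_const, nsmul_eq_mul,
    mul_one, hcompl, div_eq_mul_inv]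

lemma ZMod.card_filter_natCast_mul_eq_zero (n m : ℕ) [NeZero n] :
    #{x : ZMod n | (m : ZMod n) * x = 0} = n.gcd m := by
  have hker := IsAddCyclic.card_nsmulAddMonoidHom_ker (ZMod n) m
  rw [Nat.card_zmod, Nat.card_eq_fintype_card] at hker
  rw [← hker, ← Fintype.card_coe]
  exact Fintype.card_congr (Equiv.subtypeEquivRight fun x ↦ by simp [nsmul_eq_mul])

section freqs
variable {R : Type*} [CommRing R] {c : R}

/-- The frequencies of the three exponentials in `α(d/n, dc/n)`. -/
def freqs (c d : R) : Multiset R := {d, d * c, -(d + d * c)}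

lemma freqs_mul_eq_of_sq_eq_one (hc : c ^ 2 = 1) (d : R) : freqs c (d * c) = freqs c d := by
  have hcc : d * c * c = d := by linear_combination d * hc
  simp only [freqs, hcc, add_comm (d * c), Multiset.insert_eq_cons, Multiset.cons_swap]

lemma freqs_eq_freqs_iff_of_sq_eq_one (hc : c ^ 2 = 1) {d d' : R} :
    freqs c d' = freqs c d ↔ d' = d ∨ d' = d * c := by
  classical
  refine ⟨fun h ↦ ?_, ?_⟩
  · have hmem : d' ∈ freqs c d := h ▸ by simp [freqs]
    simp only [freqs, Multiset.insert_eq_cons, Multiset.mem_cons, Multiset.mem_singleton] at hmem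
    rcases hmem with h' | h' | h'
    · exact .inl h'
    · exact .inr h'
    · -- then `d'` occurs twice in `freqs c d'`, so it must also occur among `d, d * c`
      have hfix : d' * c = d' := by rw [h']; linear_combination (-d) * hc
      have hcount := congrArg (Multiset.count d') h
      by_contra! hne
      simp [freqs, hfix, ← h', hne.1, hne.2] at hcount
  · rintro (rfl | rfl)
    · rfl
    · exact freqs_mul_eq_of_sq_eq_one hc d

lemma freqs_eq_of_sq_add_add_one (hc : c ^ 2 + c + 1 = 0) (d : R) :
    freqs c d = {d, d * c, d * c * c} := by
  rw [freqs, show -(d + d * c) = d * c * c by linear_combination (-d) * hc]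

lemma freqs_mul_eq_of_sq_add_add_one (hc : c ^ 2 + c + 1 = 0) (d : R) :
    freqs c (d * c) = freqs c d := by
  have hccc : d * c * c * c = d := by linear_combination (d * (c - 1)) * hc
  simp only [freqs_eq_of_sq_add_add_one hc, hccc, Multiset.insert_eq_cons,
    ← Multiset.singleton_add]
  abel

lemma freqs_eq_freqs_iff_of_sq_add_add_one (hc : c ^ 2 + c + 1 = 0) {d d' : R} :
    freqs c d' = freqs c d ↔ d' = d ∨ d' = d * c ∨ d' = d * c * c := by
  refine ⟨fun h ↦ ?_, ?_⟩
  · have hmem : d' ∈ freqs c d := h ▸ by simp [freqs]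
    simpa [freqs_eq_of_sq_add_add_one hc] using hmem
  · rintro (rfl | rfl | rfl)
    · rfl
    · exact freqs_mul_eq_of_sq_add_add_one hc d
    · rw [freqs_mul_eq_of_sq_add_add_one hc, freqs_mul_eq_of_sq_add_add_one hc]

variable [Fintype R] [DecidableEq R]

lemma card_filter_freqs_eq_of_sq_eq_one (hc : c ^ 2 = 1) (d : R) :
    #{d' | freqs c d' = freqs c d} = if d * c = d then 1 else 2 := by
  have hfib : ({d' | freqs c d' = freqs c d} : Finset R) = {d, d * c} := by
    ext d'
    simp [freqs_eq_freqs_iff_of_sq_eq_one hc]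
  rw [hfib]
  split_ifs with hdc
  · simp [hdc]
  · exact card_pair (Ne.symm hdc)

lemma card_filter_freqs_eq_of_sq_add_add_one (hc : c ^ 2 + c + 1 = 0) (d : R) :
    #{d' | freqs c d' = freqs c d} = if d * c = d then 1 else 3 := by
  have hfib : ({d' | freqs c d' = freqs c d} : Finset R) = {d, d * c, d * c * c} := by
    ext d'
    simp [freqs_eq_freqs_iff_of_sq_add_add_one hc]
  rw [hfib]
  split_ifs with hdc
  · simp [hdc]
  · -- `c ^ 3 = 1`, so either equality below would force `d * c = d`
    have h₁ : d * c * c ≠ d := fun h ↦ hdc (by linear_combination (d * (c - 1)) * hc - c * h)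
    have h₂ : d * c * c ≠ d * c := fun h ↦
      hdc (by linear_combination (d * (c - 1)) * hc - (1 + c) * h)
    exact card_eq_three.2 ⟨_, _, _, Ne.symm hdc, Ne.symm h₁, Ne.symm h₂, rfl⟩

end freqs

namespace ZMod
variable {n : ℕ} [NeZero n]

noncomputable def alphaMod (c d : ZMod n) : ℂ :=
  toCircle d + toCircle (d * c) + toCircle (-(d + d * c))

lemma alpha_intCast_div (k : ℕ) (d : ℤ) :
    alpha ((d : ℝ) / n) ((d * k : ℝ) / n) = alphaMod (k : ZMod n) d := by
  have hmul : (d : ZMod n) * k = ((d * k : ℤ) : ZMod n) := by push_cast; rfl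
  have hneg : -((d : ZMod n) + d * k) = ((-(d + d * k) : ℤ) : ZMod n) := by push_cast; rfl
  rw [alphaMod, hneg, hmul, toCircle_intCast, toCircle_intCast, toCircle_intCast, alpha]
  push_cast
  ring_nf

lemma alphaMod_eq_alphaMod_iff {c d d' : ZMod n} :
    alphaMod c d' = alphaMod c d ↔ freqs c d' = freqs c d := by
  have hprod (x : ZMod n) : toCircle x * toCircle (x * c) * toCircle (-(x + x * c)) = 1 := by
    rw [← AddChar.map_add_eq_mul, ← AddChar.map_add_eq_mul, add_neg_cancel,
      AddChar.map_zero_eq_one]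
  refine ⟨fun h ↦ ?_, fun h ↦ ?_⟩
  · have := Circle.multiset_eq_of_sum_eq (hprod d') (hprod d) h
    exact Multiset.map_injective injective_toCircle (by simpa [freqs] using this)
  · have := congrArg (fun s ↦ (s.map (fun x ↦ (toCircle x : ℂ))).sum) h
    simpa [freqs, alphaMod, add_assoc] using this

lemma setOf_alpha_eq_range (k : ℕ) :
    {z : ℂ | ∃ d : ℤ, z = alpha ((d : ℝ) / n) ((d * k : ℝ) / n)} =
      Set.range (alphaMod (k : ZMod n)) := by
  ext z
  simp only [Set.mem_ofPred_eq, Set.mem_range, alpha_intCast_div, eq_comm (a := z)]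
  exact (intCast_surjective.exists (p := fun y ↦ alphaMod (k : ZMod n) y = z)).symm

lemma card_filter_mul_natCast_eq_self {k : ℕ} (hk : 1 ≤ k) :
    #{d : ZMod n | d * k = d} = n.gcd (k - 1) := by
  rw [← card_filter_natCast_mul_eq_zero]
  congr 1
  ext d
  simp [Nat.cast_sub hk, mul_comm, mul_sub, sub_eq_zero]

lemma ncard_setOf_alpha {k p : ℕ} (hk : 1 ≤ k)
    (hfib : ∀ d : ZMod n, #{d' | freqs (k : ZMod n) d' = freqs (k : ZMod n) d} =
      if d * k = d then 1 else p) :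
    ({z : ℂ | ∃ d : ℤ, z = alpha ((d : ℝ) / n) ((d * k : ℝ) / n)}.ncard : ℚ) =
      n.gcd (k - 1) + (n - n.gcd (k - 1)) / p := by
  rw [setOf_alpha_eq_range, ← Set.image_univ, ← coe_univ, ← coe_image, Set.ncard_coe_finset,
    card_image_eq_of_card_fiber_eq_ite (P := fun d : ZMod n ↦ d * k = d) (p := p), ZMod.card,
    card_filter_mul_natCast_eq_self hk]
  intro d
  simpa only [alphaMod_eq_alphaMod_iff] using hfib d

end ZMod

open ZMod in
lemma ncard_setOf_alpha_sq_sub_one {k : ℕ} (hk : 2 ≤ k) :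
    ({z : ℂ | ∃ d : ℤ, z = alpha ((d : ℝ) / ((k : ℝ) ^ 2 - 1))
        ((d * k : ℝ) / ((k : ℝ) ^ 2 - 1))}.ncard : ℚ) = ((k : ℚ) ^ 2 - 1 + (k - 1)) / 2 := by
  have hk2 : 1 ≤ k ^ 2 := Nat.one_le_pow _ _ (by omega)
  have : NeZero (k ^ 2 - 1) := ⟨by have := Nat.pow_le_pow_left hk 2; omega⟩
  have hcast : ((k ^ 2 - 1 : ℕ) : ℝ) = (k : ℝ) ^ 2 - 1 := by push_cast [hk2]; ring
  have hc : (k : ZMod (k ^ 2 - 1)) ^ 2 = 1 := by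
    have := natCast_self (k ^ 2 - 1)
    push_cast [hk2] at this
    linear_combination this
  have hgcd : (k ^ 2 - 1).gcd (k - 1) = k - 1 :=
    Nat.gcd_eq_right (by simpa using Nat.sub_dvd_pow_sub_pow k 1 2)
  rw [← hcast, ncard_setOf_alpha (by omega) (card_filter_freqs_eq_of_sq_eq_one hc), hgcd]
  push_cast [hk2, (by omega : 1 ≤ k)]
  ring

open ZMod in
lemma ncard_setOf_alpha_sq_add_add_one {k : ℕ} (hk : 1 ≤ k) :
    ({z : ℂ | ∃ d : ℤ, z = alpha ((d : ℝ) / ((k : ℝ) ^ 2 + k + 1))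
        ((d * k : ℝ) / ((k : ℝ) ^ 2 + k + 1))}.ncard : ℚ) =
      ((k : ℚ) ^ 2 + k + 1 + 2 * (k - 1).gcd 3) / 3 := by
  have hc : (k : ZMod (k ^ 2 + k + 1)) ^ 2 + k + 1 = 0 := by
    exact_mod_cast natCast_self (k ^ 2 + k + 1)
  have hgcd : (k ^ 2 + k + 1).gcd (k - 1) = (k - 1).gcd 3 := by
    obtain ⟨j, rfl⟩ : ∃ j, k = j + 1 := ⟨k - 1, by omega⟩
    rw [Nat.gcd_comm, show (j + 1) ^ 2 + (j + 1) + 1 = 3 + (j + 3) * (j + 1 - 1) by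
      simp only [Nat.add_sub_cancel]; ring, Nat.gcd_add_mul_right_right]
  have hcount :=
    ncard_setOf_alpha (n := k ^ 2 + k + 1) hk (card_filter_freqs_eq_of_sq_add_add_one hc)
  push_cast at hcount
  rw [hcount, hgcd]
  ring

theorem card_B_and_C (k : ℕ) (hk : 2 ≤ k) :
    (({z : ℂ | ∃ d : ℤ, z = alpha ((d : ℝ) / ((k : ℝ)^2 - 1))
        ((d * k : ℝ) / ((k : ℝ)^2 - 1))}).ncard : ℚ)
      = (((k : ℚ)^2 - 1) + ((k : ℚ) - 1)) / 2 ∧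
    (({z : ℂ | ∃ d : ℤ, z = alpha ((d : ℝ) / ((k : ℝ)^2 + (k : ℝ) + 1))
        ((d * k : ℝ) / ((k : ℝ)^2 + (k : ℝ) + 1))}).ncard : ℚ)
      = (((k : ℚ)^2 + (k : ℚ) + 1) + 2 * (Nat.gcd (k - 1) 3 : ℚ)) / 3 :=
  ⟨ncard_setOf_alpha_sq_sub_one hk, ncard_setOf_alpha_sq_add_add_one (by omega)⟩
end
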